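/- The map f ↦ max(f) := max_{u∈ℕ×ℤ^d} f(u) (the maximum is attained since f is summable) is continuous on (S, d): for every f ∈ S and ε > 0 there exists δ > 0 such that every g ∈ S with d(f,g) < δ satisfies |max(g) − max(f)| < ε. -/

import Mathlib

open Filter MeasureTheory
open scoped BigOperators Topology ENNReal Classical

namespace DirectedPolymers

/-- The disjoint union of countably many copies of `ℤ^d`. -/
abbrev Site (d : ℕ) := ℕ × (Fin d → ℤ)

/-- `‖u - v‖₁`: the `ℓ¹` distance within a common copy of `ℤ^d`, and `∞` across copies. -/
noncomputable def dist1 {d : ℕ} (u v : Site d) : ENat :=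
  if u.1 = v.1 then ((∑ i, (u.2 i - v.2 i).natAbs : ℕ) : ENat) else ⊤

/-- `u' - v' = u - v` in `ℤ^d ∪ {∞}`: either both differences are taken in the same copy
of `ℤ^d` and agree, or both are `∞`. -/
def sameDiff {d : ℕ} (u' v' u v : Site d) : Prop :=
  (u'.1 = v'.1 ∧ u.1 = v.1 ∧ u'.2 - v'.2 = u.2 - v.2) ∨ (u'.1 ≠ v'.1 ∧ u.1 ≠ v.1)

/-- `φ` is an isometry of degree `m` on `A`:
`φ(u) - φ(v) = u - v` whenever `‖u-v‖₁ < m` or `‖φ(u)-φ(v)‖₁ < m`. -/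
def IsIsoDeg {d : ℕ} (A : Set (Site d)) (φ : Site d → Site d) (m : ENat) : Prop :=
  ∀ u ∈ A, ∀ v ∈ A, (dist1 u v < m ∨ dist1 (φ u) (φ v) < m) → sameDiff (φ u) (φ v) u v

/-- `2^{-m}`, with value `0` at `m = ∞`. -/
noncomputable def twoPowNeg (m : ENat) : ℝ :=
  if m = ⊤ then 0 else (2 : ℝ) ^ (-(m.toNat : ℤ))

/-- The quantity `d_φ(f,g)` associated to an isometry `φ` with finite domain `A` and
degree (at least) `m`. -/
noncomputable def dPhi {d : ℕ} (A : Finset (Site d)) (φ : Site d → Site d) (m : ENat)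
    (f g : Site d → ℝ) : ℝ :=
  2 * ∑ u ∈ A, |f u - g (φ u)|
    + (∑' u : {u : Site d // u ∉ A}, (f u.1) ^ 2)
    + (∑' u : {u : Site d // u ∉ A.image φ}, (g u.1) ^ 2)
    + twoPowNeg m

/-- `d(f,g)`: the infimum of `d_φ(f,g)` over all isometries `φ` with finite domain. -/
noncomputable def pdist {d : ℕ} (f g : Site d → ℝ) : ℝ :=
  sInf { r : ℝ | ∃ (A : Finset (Site d)) (φ : Site d → Site d) (m : ENat),
    1 ≤ m ∧ IsIsoDeg (A : Set (Site d)) φ m ∧ r = dPhi A φ m f g }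

/-- Membership in `S`: nonnegative subprobability mass functions on `ℕ × ℤ^d`. -/
def memS {d : ℕ} (f : Site d → ℝ) : Prop :=
  (∀ u, 0 ≤ f u) ∧ Summable f ∧ (∑' u, f u) ≤ 1

lemma twoPowNeg_nonneg (m : ENat) : 0 ≤ twoPowNeg m := by
  unfold twoPowNeg
  split
  · exact le_rfl
  · positivity

lemma dPhi_nonneg {d : ℕ} (A : Finset (Site d)) (φ : Site d → Site d) (m : ENat)
    (f g : Site d → ℝ) : 0 ≤ dPhi A φ m f g := by
  unfold dPhi
  have h0 : 0 ≤ ∑ u ∈ A, |f u - g (φ u)| :=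
    Finset.sum_nonneg fun u _ => abs_nonneg _
  have h1 : 0 ≤ ∑' u : {u : Site d // u ∉ A}, (f u.1) ^ 2 :=
    tsum_nonneg fun u => sq_nonneg _
  have h2 : 0 ≤ ∑' u : {u : Site d // u ∉ A.image φ}, (g u.1) ^ 2 :=
    tsum_nonneg fun u => sq_nonneg _
  have h3 := twoPowNeg_nonneg m
  linarith

/-- The maximum functional `f ↦ max_u f(u)` is continuous on `(S, d)`. -/
theorem max_continuous {d : ℕ} (hd : 1 ≤ d) (f : Site d → ℝ) (hf : memS f)
    (ε : ℝ) (hε : 0 < ε) :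
    ∃ δ > (0 : ℝ), ∀ g : Site d → ℝ, memS g → pdist f g < δ →
      |(⨆ u, g u) - ⨆ u, f u| < ε := by
  classical
  set δ : ℝ := min 1 (ε ^ 2 / 9) with hδdef
  have hδpos : 0 < δ := lt_min one_pos (by positivity)
  have hδ1 : δ ≤ 1 := min_le_left _ _
  have hsq3 : Real.sqrt δ ≤ ε / 3 := by
    have h1 : δ ≤ (ε / 3) ^ 2 := le_trans (min_le_right _ _) (by ring_nf; exact le_rfl)
    calc Real.sqrt δ ≤ Real.sqrt ((ε / 3) ^ 2) := Real.sqrt_le_sqrt h1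
      _ = ε / 3 := Real.sqrt_sq (by positivity)
  have hδsq : δ ≤ Real.sqrt δ := by
    calc δ = Real.sqrt (δ ^ 2) := (Real.sqrt_sq hδpos.le).symm
      _ ≤ Real.sqrt δ := Real.sqrt_le_sqrt (by nlinarith)
  refine ⟨δ, hδpos, ?_⟩
  intro g hg hlt
  obtain ⟨hf0, hfs, hf1⟩ := hf
  obtain ⟨hg0, hgs, hg1⟩ := hg
  have hfle : ∀ u, f u ≤ 1 := fun u =>
    le_trans (Summable.le_tsum hfs u fun j _ => hf0 j) hf1
  have hgle : ∀ u, g u ≤ 1 := fun u =>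
    le_trans (Summable.le_tsum hgs u fun j _ => hg0 j) hg1
  have hf2s : Summable (fun u => f u ^ 2) :=
    Summable.of_nonneg_of_le (fun u => sq_nonneg _)
      (fun u => by nlinarith [hf0 u, hfle u]) hfs
  have hg2s : Summable (fun u => g u ^ 2) :=
    Summable.of_nonneg_of_le (fun u => sq_nonneg _)
      (fun u => by nlinarith [hg0 u, hgle u]) hgs
  have hbf : BddAbove (Set.range f) := ⟨1, by rintro y ⟨u, rfl⟩; exact hfle u⟩
  have hbg : BddAbove (Set.range g) := ⟨1, by rintro y ⟨u, rfl⟩; exact hgle u⟩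
  have hsupf0 : (0 : ℝ) ≤ ⨆ u, f u :=
    le_trans (hf0 ((0 : ℕ), (0 : Fin d → ℤ))) (le_ciSup hbf _)
  have hsupg0 : (0 : ℝ) ≤ ⨆ u, g u :=
    le_trans (hg0 ((0 : ℕ), (0 : Fin d → ℤ))) (le_ciSup hbg _)
  -- extract a witness from the infimum
  have hne : { r : ℝ | ∃ (A : Finset (Site d)) (φ : Site d → Site d) (m : ENat),
      1 ≤ m ∧ IsIsoDeg (A : Set (Site d)) φ m ∧ r = dPhi A φ m f g }.Nonempty := by
    refine ⟨dPhi ∅ id 1 f g, ∅, id, 1, le_rfl, ?_, rfl⟩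
    intro u hu
    simp at hu
  have hbdd : BddBelow { r : ℝ | ∃ (A : Finset (Site d)) (φ : Site d → Site d) (m : ENat),
      1 ≤ m ∧ IsIsoDeg (A : Set (Site d)) φ m ∧ r = dPhi A φ m f g } := by
    refine ⟨0, ?_⟩
    rintro r ⟨A, φ, m, -, -, rfl⟩
    exact dPhi_nonneg A φ m f g
  rw [pdist, csInf_lt_iff hbdd hne] at hlt
  obtain ⟨r, ⟨A, φ, m, hm, hiso, rfl⟩, hr⟩ := hlt
  -- split dPhi into its pieces
  have h0 : 0 ≤ ∑ u ∈ A, |f u - g (φ u)| :=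
    Finset.sum_nonneg fun u _ => abs_nonneg _
  have h1 : 0 ≤ ∑' u : {u : Site d // u ∉ A}, (f u.1) ^ 2 :=
    tsum_nonneg fun u => sq_nonneg _
  have h2 : 0 ≤ ∑' u : {u : Site d // u ∉ A.image φ}, (g u.1) ^ 2 :=
    tsum_nonneg fun u => sq_nonneg _
  have h3 := twoPowNeg_nonneg m
  rw [dPhi] at hr
  have hT0 : ∑ u ∈ A, |f u - g (φ u)| ≤ δ / 2 := by linarith
  have hT1 : (∑' u : {u : Site d // u ∉ A}, (f u.1) ^ 2) ≤ δ := by linarith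
  have hT2 : (∑' u : {u : Site d // u ∉ A.image φ}, (g u.1) ^ 2) ≤ δ := by linarith
  -- pointwise consequences
  have habs : ∀ u ∈ A, |f u - g (φ u)| ≤ δ / 2 := fun u hu =>
    le_trans (Finset.single_le_sum (f := fun v => |f v - g (φ v)|) (fun i _ => abs_nonneg _) hu) hT0
  have hout_f : ∀ u, u ∉ A → f u ≤ Real.sqrt δ := by
    intro u hu
    have hle : f u ^ 2 ≤ ∑' v : {v : Site d // v ∉ A}, (f v.1) ^ 2 :=
      Summable.le_tsum (hf2s.subtype {v : Site d | v ∉ A}) (⟨u, hu⟩ : {v : Site d // v ∉ A})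
        (fun j _ => sq_nonneg _)
    calc f u = Real.sqrt (f u ^ 2) := (Real.sqrt_sq (hf0 u)).symm
      _ ≤ Real.sqrt δ := Real.sqrt_le_sqrt (le_trans hle hT1)
  have hout_g : ∀ u, u ∉ A.image φ → g u ≤ Real.sqrt δ := by
    intro u hu
    have hle : g u ^ 2 ≤ ∑' v : {v : Site d // v ∉ A.image φ}, (g v.1) ^ 2 :=
      Summable.le_tsum (hg2s.subtype {v : Site d | v ∉ A.image φ})
        (⟨u, hu⟩ : {v : Site d // v ∉ A.image φ}) (fun j _ => sq_nonneg _)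
    calc g u = Real.sqrt (g u ^ 2) := (Real.sqrt_sq (hg0 u)).symm
      _ ≤ Real.sqrt δ := Real.sqrt_le_sqrt (le_trans hle hT2)
  have hsqnn : (0 : ℝ) ≤ Real.sqrt δ := Real.sqrt_nonneg _
  -- sup f ≤ sup g + (δ/2 + √δ)
  have hsf : (⨆ u, f u) ≤ (⨆ u, g u) + (δ / 2 + Real.sqrt δ) := by
    refine ciSup_le fun u => ?_
    by_cases hu : u ∈ A
    · have h1 := habs u hu
      have h2 : g (φ u) ≤ ⨆ v, g v := le_ciSup hbg (φ u)
      have h3 : f u - g (φ u) ≤ |f u - g (φ u)| := le_abs_self _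
      linarith
    · have := hout_f u hu
      linarith
  have hsg : (⨆ u, g u) ≤ (⨆ u, f u) + (δ / 2 + Real.sqrt δ) := by
    refine ciSup_le fun u => ?_
    by_cases hu : u ∈ A.image φ
    · obtain ⟨a, ha, rfl⟩ := Finset.mem_image.mp hu
      have h1 := habs a ha
      have h2 : f a ≤ ⨆ v, f v := le_ciSup hbf a
      have h3 : g (φ a) - f a ≤ |f a - g (φ a)| := by
        rw [abs_sub_comm]; exact le_abs_self _
      linarith
    · have := hout_g u hu
      linarith
  have hfin : |(⨆ u, g u) - ⨆ u, f u| ≤ δ / 2 + Real.sqrt δ :=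
    abs_le.mpr ⟨by linarith, by linarith⟩
  have : δ / 2 + Real.sqrt δ < ε := by linarith
  linarith

end DirectedPolymers
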